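/- arXiv:1501.01511 — 3 statements merged into one kernel-verified Lean document; each statement's English description precedes it below -/
import Mathlib

section
/- If G is a finite cubic graph (every vertex has degree 3) of order n, then the lower 2-limited packing number satisfies L^ℓ_2(G) ≥ n/4. -/
/-!
Let `B` be a maximal `k`-limited packing (`k ≥ 2`) in a graph of maximum degree at most `k + 1`,
and write `f v = |N[v] ∩ B|`. Double counting gives `∑ f = ∑_{b ∈ B} |N[b]| ≤ (k + 2)|B|`.
By maximality every vertex `u` with `f u = 0` lies in the closed neighbourhood of a vertex `v`
with `f v = k`, and `N[v]` has room for only one such `u` besides `v` and the `k` vertices of `B`.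
Hence `#{f = 0} ≤ #{f = k}`, so `n = #{f = 0} + #{f ≥ 1} ≤ #{f = k} + #{f ≥ 1} ≤ ∑ f`.
For cubic graphs and `k = 2` this is `n ≤ 4 |B|`.
-/

open SimpleGraph Finset

variable {V : Type*}

/-- The closed neighborhood `N[v]` of a vertex `v`, as a `Finset`. -/
def closedNbrFinset (G : SimpleGraph V) [Fintype V] [DecidableEq V] [DecidableRel G.Adj]
    (v : V) : Finset V :=
  insert v (G.neighborFinset v)

/-- `B` is a `k`-limited packing in `G`. -/
def IsLimitedPacking (G : SimpleGraph V) [Fintype V] [DecidableEq V] [DecidableRel G.Adj]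
    (k : ℕ) (B : Finset V) : Prop :=
  ∀ v : V, (closedNbrFinset G v ∩ B).card ≤ k

/-- The lower `k`-limited packing number `L^ℓ_k(G)`: the minimum cardinality of a
`k`-limited packing that is maximal under inclusion among `k`-limited packings. -/
noncomputable def lowerLimitedPackingNumber (G : SimpleGraph V) [Fintype V] [DecidableEq V]
    [DecidableRel G.Adj] (k : ℕ) : ℕ :=
  sInf {m | ∃ B : Finset V, Maximal (IsLimitedPacking G k) B ∧ B.card = m}

section LimitedPacking

variable (G : SimpleGraph V) [Fintype V] [DecidableEq V] [DecidableRel G.Adj]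

lemma self_mem_closedNbrFinset (v : V) : v ∈ closedNbrFinset G v :=
  mem_insert_self _ _

lemma mem_closedNbrFinset_comm {u v : V} :
    u ∈ closedNbrFinset G v ↔ v ∈ closedNbrFinset G u := by
  simp only [closedNbrFinset, mem_insert, mem_neighborFinset, G.adj_comm u v, eq_comm]

lemma card_closedNbrFinset (v : V) : #(closedNbrFinset G v) = G.degree v + 1 := by
  rw [closedNbrFinset, card_insert_of_notMem (by simp), card_neighborFinset_eq_degree]

lemma sum_card_closedNbrFinset_inter (B : Finset V) :
    ∑ v, #(closedNbrFinset G v ∩ B) = ∑ b ∈ B, #(closedNbrFinset G b) := by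
  convert sum_card_bipartiteAbove_eq_sum_card_bipartiteBelow
    (s := univ) (t := B) (fun v b => b ∈ closedNbrFinset G v) using 3 with v - b -
  · ext; simp [bipartiteAbove, and_comm]
  · ext u; simp [bipartiteBelow, mem_closedNbrFinset_comm G (u := u)]

lemma sum_card_closedNbrFinset_inter_le {d : ℕ} (hdeg : ∀ v, G.degree v ≤ d) (B : Finset V) :
    ∑ v, #(closedNbrFinset G v ∩ B) ≤ (d + 1) * #B := by
  rw [sum_card_closedNbrFinset_inter, mul_comm, ← smul_eq_mul, ← sum_const]
  exact sum_le_sum fun b _ => (card_closedNbrFinset G b).trans_le (by simp [hdeg b])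

variable {G}

lemma notMem_of_card_closedNbrFinset_inter_eq_zero {B : Finset V} {u x : V}
    (hu : #(closedNbrFinset G u ∩ B) = 0) (hx : x ∈ closedNbrFinset G u) : x ∉ B := fun h =>
  (card_pos.2 ⟨x, mem_inter.2 ⟨hx, h⟩⟩).ne' hu

lemma isLimitedPacking_empty (k : ℕ) : IsLimitedPacking G k ∅ := by
  simp [IsLimitedPacking]

lemma exists_maximal_card_eq_lowerLimitedPackingNumber (k : ℕ) :
    ∃ B, Maximal (IsLimitedPacking G k) B ∧ #B = lowerLimitedPackingNumber G k := by
  obtain ⟨B, -, hB⟩ := Finite.exists_le_maximal (isLimitedPacking_empty (G := G) k)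
  exact Nat.sInf_mem (⟨#B, B, hB, rfl⟩ :
    {m | ∃ B : Finset V, Maximal (IsLimitedPacking G k) B ∧ #B = m}.Nonempty)

lemma exists_mem_closedNbrFinset_card_inter_eq_of_maximal {k : ℕ} {B : Finset V}
    (hB : Maximal (IsLimitedPacking G k) B) {u : V} (hu : u ∉ B) :
    ∃ v, u ∈ closedNbrFinset G v ∧ #(closedNbrFinset G v ∩ B) = k := by
  have hnot : ¬ IsLimitedPacking G k (insert u B) := fun h =>
    hu (hB.2 h (subset_insert u B) (mem_insert_self u B))
  obtain ⟨v, hv⟩ := not_forall.1 hnot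
  have hvk := hB.1 v
  by_cases huv : u ∈ closedNbrFinset G v
  · rw [inter_insert_of_mem huv, card_insert_of_notMem fun h => hu (mem_inter.1 h).2] at hv
    exact ⟨v, huv, by omega⟩
  · rw [inter_insert_of_notMem huv] at hv
    exact absurd hvk hv

lemma subsingleton_closedNbrFinset_card_inter_eq_zero {k : ℕ} (hk : 0 < k) {B : Finset V}
    {v : V} (hdeg : G.degree v ≤ k + 1) (hv : #(closedNbrFinset G v ∩ B) = k) :
    ({u | u ∈ closedNbrFinset G v ∧ #(closedNbrFinset G u ∩ B) = 0} : Set V).Subsingleton := by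
  rintro u₁ ⟨hu₁v, hu₁⟩ u₂ ⟨hu₂v, hu₂⟩
  have hvB : v ∉ B :=
    notMem_of_card_closedNbrFinset_inter_eq_zero hu₁ ((mem_closedNbrFinset_comm G).1 hu₁v)
  set T := closedNbrFinset G v \ insert v (closedNbrFinset G v ∩ B)
  have hT : #T ≤ 1 := by
    rw [card_sdiff_of_subset (insert_subset (self_mem_closedNbrFinset G v) inter_subset_left),
      card_insert_of_notMem fun h => hvB (mem_inter.1 h).2, hv, card_closedNbrFinset]
    omega
  have hmemT : ∀ u, u ∈ closedNbrFinset G v → #(closedNbrFinset G u ∩ B) = 0 → u ∈ T := by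
    intro u huv hu
    refine mem_sdiff.2 ⟨huv, fun h => ?_⟩
    rcases mem_insert.1 h with rfl | h
    · omega
    · exact notMem_of_card_closedNbrFinset_inter_eq_zero hu (self_mem_closedNbrFinset G u)
        (mem_inter.1 h).2
  exact card_le_one.1 hT _ (hmemT _ hu₁v hu₁) _ (hmemT _ hu₂v hu₂)

lemma card_le_sum_card_closedNbrFinset_inter_of_maximal {k : ℕ} (hk : 2 ≤ k)
    (hdeg : ∀ v, G.degree v ≤ k + 1) {B : Finset V} (hB : Maximal (IsLimitedPacking G k) B) :
    Fintype.card V ≤ ∑ v, #(closedNbrFinset G v ∩ B) := by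
  set f : V → ℕ := fun v => #(closedNbrFinset G v ∩ B)
  have hzero_le_full : #{v | f v = 0} ≤ #{v | f v = k} := by
    refine card_le_card_of_forall_subsingleton (fun u v => u ∈ closedNbrFinset G v)
      (fun u hu => ?_) (fun v hv => ?_)
    · have hu : f u = 0 := (mem_filter.1 hu).2
      obtain ⟨v, huv, hv⟩ := exists_mem_closedNbrFinset_card_inter_eq_of_maximal hB
        (notMem_of_card_closedNbrFinset_inter_eq_zero hu (self_mem_closedNbrFinset G u))
      exact ⟨v, mem_filter.2 ⟨mem_univ v, hv⟩, huv⟩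
    · refine (subsingleton_closedNbrFinset_card_inter_eq_zero (by omega) (hdeg v)
        (mem_filter.1 hv).2).anti fun u hu => ⟨hu.2, (mem_filter.1 hu.1).2⟩
  have hpos_add_full : #{v | 0 < f v} + #{v | f v = k} ≤ ∑ v, f v := by
    simp only [card_filter, ← sum_add_distrib]
    refine sum_le_sum fun v _ => ?_
    have := hB.1 v
    split_ifs <;> omega
  have hsplit : #{v | 0 < f v} + #{v | f v = 0} = Fintype.card V := by
    simpa only [not_lt, Nat.le_zero, card_univ] using
      card_filter_add_card_filter_not (s := univ) (0 < f ·)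
  calc Fintype.card V = #{v | 0 < f v} + #{v | f v = 0} := hsplit.symm
    _ ≤ #{v | 0 < f v} + #{v | f v = k} := by gcongr
    _ ≤ ∑ v, f v := hpos_add_full

theorem card_le_mul_card_of_maximal {k : ℕ} (hk : 2 ≤ k) (hdeg : ∀ v, G.degree v ≤ k + 1)
    {B : Finset V} (hB : Maximal (IsLimitedPacking G k) B) :
    Fintype.card V ≤ (k + 2) * #B :=
  (card_le_sum_card_closedNbrFinset_inter_of_maximal hk hdeg hB).trans
    (sum_card_closedNbrFinset_inter_le G hdeg B)

end LimitedPacking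

/-- If `G` is a cubic graph of order `n`, then `L^ℓ_2(G) ≥ n / 4`. -/
theorem lowerLimitedPackingNumber_two_cubic (G : SimpleGraph V) [Fintype V] [DecidableEq V]
    [DecidableRel G.Adj] (hcubic : ∀ v : V, G.degree v = 3) :
    (lowerLimitedPackingNumber G 2 : ℝ) ≥ (Fintype.card V : ℝ) / 4 := by
  obtain ⟨B, hB, hcard⟩ := exists_maximal_card_eq_lowerLimitedPackingNumber (G := G) 2
  have h : Fintype.card V ≤ 4 * lowerLimitedPackingNumber G 2 :=
    hcard ▸ card_le_mul_card_of_maximal le_rfl (fun v => (hcubic v).le) hB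
  rw [ge_iff_le, div_le_iff₀ (by norm_num)]
  exact_mod_cast h.trans_eq (mul_comm _ _)
end

section
/- For every finite simple graph G of order n, the 2-limited packing numbers of G and its complement Ḡ satisfy L_2(G) + L_2(Ḡ) ≤ n + 2. -/
open SimpleGraph Finset

variable {V : Type*}

/-- The `k`-limited packing number `L_k(G)`: the maximum cardinality of a
`k`-limited packing in `G`. -/
noncomputable def limitedPackingNumber (G : SimpleGraph V) [Fintype V] [DecidableEq V]
    [DecidableRel G.Adj] (k : ℕ) : ℕ :=
  sSup {m | ∃ B : Finset V, IsLimitedPacking G k B ∧ B.card = m}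

/-! Among three vertices, one of the two graphs `G`, `Gᶜ` contains at least two of the three
edges, so some vertex is adjacent to the other two in that graph. A `2`-limited packing of `G`
and one of `Gᶜ` therefore share at most two vertices, and `|B| + |B'| = |B ∪ B'| + |B ∩ B'|`. -/

section LimitedPacking

variable (G : SimpleGraph V) [Fintype V] [DecidableEq V] [DecidableRel G.Adj]

theorem mem_closedNbrFinset {a v : V} :
    v ∈ closedNbrFinset G a ↔ v = a ∨ G.Adj a v := by
  simp only [closedNbrFinset, mem_insert, mem_neighborFinset]

theorem exists_mem_subset_closedNbrFinset_or_compl {S : Finset V} (hS : S.card = 3) :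
    ∃ a ∈ S, S ⊆ closedNbrFinset G a ∨ S ⊆ closedNbrFinset Gᶜ a := by
  obtain ⟨x, y, z, hxy, hxz, hyz, rfl⟩ := card_eq_three.mp hS
  simp only [exists_mem_insert, exists_eq_left, mem_singleton,
    insert_subset_iff, singleton_subset_iff, mem_closedNbrFinset, compl_adj]
  by_cases G.Adj x y <;> by_cases G.Adj x z <;> by_cases G.Adj y z <;>
    simp_all [G.adj_comm, eq_comm]

variable {G}

theorem IsLimitedPacking.card_le_of_subset {k : ℕ} {B S : Finset V} (hB : IsLimitedPacking G k B)
    (hSB : S ⊆ B) {a : V} (hS : S ⊆ closedNbrFinset G a) : S.card ≤ k :=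
  (card_le_card (subset_inter hS hSB)).trans (hB a)

theorem card_inter_le_two_of_isLimitedPacking_compl {B B' : Finset V}
    (hB : IsLimitedPacking G 2 B) (hB' : IsLimitedPacking Gᶜ 2 B') : (B ∩ B').card ≤ 2 := by
  by_contra! h
  obtain ⟨S, hSB, hS⟩ := exists_subset_card_eq (show 3 ≤ (B ∩ B').card by omega)
  obtain ⟨a, -, hSa | hSa⟩ := exists_mem_subset_closedNbrFinset_or_compl G hS
  · have := hB.card_le_of_subset (hSB.trans inter_subset_left) hSa
    omega
  · have := hB'.card_le_of_subset (hSB.trans inter_subset_right) hSa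
    omega

theorem card_add_card_le_of_isLimitedPacking_compl {B B' : Finset V}
    (hB : IsLimitedPacking G 2 B) (hB' : IsLimitedPacking Gᶜ 2 B') :
    B.card + B'.card ≤ Fintype.card V + 2 := by
  rw [← card_union_add_card_inter]
  exact add_le_add (card_le_univ _) (card_inter_le_two_of_isLimitedPacking_compl hB hB')

variable (G)

theorem exists_isLimitedPacking_card_eq_limitedPackingNumber (k : ℕ) :
    ∃ B : Finset V, IsLimitedPacking G k B ∧ B.card = limitedPackingNumber G k := by
  apply Nat.sSup_mem (s := {m | ∃ B : Finset V, IsLimitedPacking G k B ∧ B.card = m})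
  · exact ⟨0, ∅, fun v => by simp, rfl⟩
  · refine ⟨Fintype.card V, ?_⟩
    rintro _ ⟨B, -, rfl⟩
    exact card_le_univ B

end LimitedPacking

/-- Nordhaus–Gaddum: for every graph `G` of order `n`, `L₂(G) + L₂(Ḡ) ≤ n + 2`. -/
theorem limitedPackingNumber_two_nordhaus_gaddum (G : SimpleGraph V) [Fintype V]
    [DecidableEq V] [DecidableRel G.Adj] :
    limitedPackingNumber G 2 + limitedPackingNumber Gᶜ 2 ≤ Fintype.card V + 2 := by
  obtain ⟨B, hB, hBcard⟩ := exists_isLimitedPacking_card_eq_limitedPackingNumber G 2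
  obtain ⟨B', hB', hB'card⟩ := exists_isLimitedPacking_card_eq_limitedPackingNumber Gᶜ 2
  rw [← hBcard, ← hB'card]
  exact card_add_card_le_of_isLimitedPacking_compl hB hB'
end

section
/- Let T be a finite tree of order n ≥ 3 with s support vertices. Then the total domination number satisfies γ_t(T) ≤ (n + s)/2. -/
open SimpleGraph Finset

variable {V : Type*}

/-- `S` is a total dominating set in `G`. -/
def IsTotalDominatingSet (G : SimpleGraph V) (S : Finset V) : Prop :=
  ∀ v : V, ∃ u ∈ S, G.Adj u v

/-- The total domination number `γ_t(G)`: the minimum cardinality of a total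
dominating set. -/
noncomputable def totalDominationNumber (G : SimpleGraph V) [Fintype V] : ℕ :=
  sInf {m | ∃ S : Finset V, IsTotalDominatingSet G S ∧ S.card = m}

/-!
Root `T` at a leaf `r` and cut it into the layers `dist r v mod 4`. Adding all support vertices to
either of the complementary unions of layers `{0, 1}` and `{2, 3}` gives a total dominating set:
a leaf is dominated by its support vertex, and every other vertex has a parent (one step closer
to `r`) and, having degree at least two in a tree, a child; one of the two lies in the chosen
layers. The two sets together have `n + s` elements, so one of them has at most `(n + s) / 2`.
-/

namespace SimpleGraph

variable {G : SimpleGraph V}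

theorem Connected.exists_adj_dist_add_one_eq (hG : G.Connected) {r v : V} (hv : v ≠ r) :
    ∃ p, G.Adj v p ∧ G.dist r p + 1 = G.dist r v := by
  obtain ⟨P, -, hPlen⟩ := hG.exists_path_of_dist v r
  have hnil : ¬P.Nil := fun h => hv h.eq
  have hadj := P.adj_snd hnil
  refine ⟨P.snd, hadj, le_antisymm ?_ ?_⟩
  · have := dist_le P.tail
    have := P.length_tail_add_one hnil
    rw [dist_comm, dist_comm (u := r)]
    omega
  · have := hG.dist_triangle (u := r) (v := P.snd) (w := v)
    rwa [dist_comm (u := P.snd), dist_eq_one_iff_adj.2 hadj] at this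

theorem IsTree.eq_penultimate_of_adj_of_dist_lt (hG : G.IsTree) {r v p : V} {Q : G.Walk r v}
    (hQ : Q.IsPath) (hadj : G.Adj v p) (hpv : G.dist r p < G.dist r v) : p = Q.penultimate := by
  classical
  obtain ⟨P, hP, hPlen⟩ := hG.connected.exists_path_of_dist r p
  have hvP : v ∉ P.support := fun hv =>
    (dist_le (P.takeUntil v hv)).trans (P.length_takeUntil_le_length hv) |>.not_gt (hPlen ▸ hpv)
  exact hG.isAcyclic.eq_penultimate_of_adj_end hQ hadj
    (hG.isAcyclic.mem_support_of_ne_mem_support_of_adj_of_isPath hQ hP hadj hvP)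

theorem IsTree.exists_adj_dist_eq_add_one [Fintype V] [DecidableRel G.Adj] (hG : G.IsTree)
    {r v : V} (hv : v ≠ r) (hdeg : G.degree v ≠ 1) :
    ∃ c, G.Adj v c ∧ G.dist r c = G.dist r v + 1 := by
  obtain ⟨p, hvp, hpd⟩ := hG.connected.exists_adj_dist_add_one_eq hv
  have hcard : 1 < (G.neighborFinset v).card := by
    have := card_pos.2 ⟨p, (G.mem_neighborFinset v p).2 hvp⟩
    rw [card_neighborFinset_eq_degree] at this ⊢
    omega
  obtain ⟨c, hc, hcp⟩ := exists_mem_ne hcard p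
  rw [mem_neighborFinset] at hc
  refine ⟨c, hc, (hG.dist_eq_dist_add_one_of_adj r hc).resolve_left fun hcd => hcp ?_⟩
  obtain ⟨Q, hQ, -⟩ := hG.connected.exists_path_of_dist r v
  rw [hG.eq_penultimate_of_adj_of_dist_lt hQ hc (by omega),
    hG.eq_penultimate_of_adj_of_dist_lt hQ hvp (by omega)]

end SimpleGraph

theorem Finset.card_union_add_card_compl_union {α : Type*} [Fintype α] [DecidableEq α]
    (A X : Finset α) : (A ∪ X).card + (Aᶜ ∪ X).card = Fintype.card α + X.card := by
  have h₁ := card_union_add_card_inter A X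
  have h₂ := card_union_add_card_inter Aᶜ X
  have h₃ := card_inter_add_card_sdiff X A
  rw [inter_comm] at h₃
  rw [card_compl, inter_comm, ← sdiff_eq_inter_compl] at h₂
  have := card_le_univ A
  omega

namespace SimpleGraph

def supportVertices (G : SimpleGraph V) [Fintype V] [DecidableRel G.Adj] : Finset V :=
  {v | ∃ u, G.Adj v u ∧ G.degree u = 1}

noncomputable def layerPair (G : SimpleGraph V) [Fintype V] (r : V) (j : ℕ) : Finset V :=
  {v | (G.dist r v + j) % 4 < 2}

variable {G : SimpleGraph V} [Fintype V]

theorem layerPair_two_eq_compl [DecidableEq V] (r : V) : G.layerPair r 2 = (G.layerPair r 0)ᶜ := by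
  ext
  simp only [layerPair, mem_filter, mem_univ, true_and, mem_compl]
  omega

variable [DecidableRel G.Adj]

theorem coe_supportVertices :
    (G.supportVertices : Set V) = {v | ∃ u, G.Adj v u ∧ G.degree u = 1} := by
  simp [supportVertices]

theorem IsTree.isTotalDominatingSet_layerPair_union_supportVertices [DecidableEq V]
    (hG : G.IsTree) {r : V} (hr : G.degree r = 1) (j : ℕ) :
    IsTotalDominatingSet G (G.layerPair r j ∪ G.supportVertices) := by
  intro v
  by_cases hv : G.degree v = 1
  · obtain ⟨u, hvu, -⟩ := degree_eq_one_iff_existsUnique_adj.1 hv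
    refine ⟨u, mem_union_right _ ?_, hvu.symm⟩
    simpa [supportVertices] using ⟨v, hvu.symm, hv⟩
  · have hvr : v ≠ r := by rintro rfl; exact hv hr
    obtain ⟨p, hvp, hpd⟩ := hG.connected.exists_adj_dist_add_one_eq hvr
    obtain ⟨c, hvc, hcd⟩ := hG.exists_adj_dist_eq_add_one hvr hv
    rcases (by omega : (G.dist r c + j) % 4 < 2 ∨ (G.dist r p + j) % 4 < 2) with h | h
    · exact ⟨c, mem_union_left _ (by simpa [layerPair] using h), hvc.symm⟩
    · exact ⟨p, mem_union_left _ (by simpa [layerPair] using h), hvp.symm⟩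

end SimpleGraph

theorem totalDominationNumber_le_card {G : SimpleGraph V} [Fintype V] {S : Finset V}
    (hS : IsTotalDominatingSet G S) : totalDominationNumber G ≤ S.card :=
  Nat.sInf_le ⟨S, hS, rfl⟩

theorem totalDominationNumber_le_tree_general (T : SimpleGraph V) [Fintype V]
    [DecidableRel T.Adj] (hT : T.IsTree) (hn : 3 ≤ Fintype.card V) :
    (totalDominationNumber T : ℝ) ≤
      ((Fintype.card V : ℝ) +
          ({v : V | ∃ u : V, T.Adj v u ∧ T.degree u = 1}.ncard : ℝ)) / 2 := by
  classical
  have : Nontrivial V := Fintype.one_lt_card_iff_nontrivial.1 (by omega)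
  obtain ⟨r, hr⟩ := hT.exists_vert_degree_one_of_nontrivial
  have h₀ := totalDominationNumber_le_card
    (hT.isTotalDominatingSet_layerPair_union_supportVertices hr 0)
  have h₂ := totalDominationNumber_le_card
    (hT.isTotalDominatingSet_layerPair_union_supportVertices hr 2)
  have hsum := card_union_add_card_compl_union (T.layerPair r 0) T.supportVertices
  rw [← layerPair_two_eq_compl] at hsum
  rw [← coe_supportVertices, Set.ncard_coe_finset, le_div_iff₀ two_pos]
  exact_mod_cast (by omega : totalDominationNumber T * 2 ≤ Fintype.card V + T.supportVertices.card)

/-- Chellali–Haynes: for a tree `T` of order `n ≥ 3` with `s` support vertices,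
`γ_t(T) ≤ (n + s) / 2`. -/
theorem totalDominationNumber_le_tree (T : SimpleGraph V) [Fintype V] [DecidableEq V]
    [DecidableRel T.Adj] (hT : T.IsTree) (hn : 3 ≤ Fintype.card V) :
    (totalDominationNumber T : ℝ) ≤
      ((Fintype.card V : ℝ) +
          ({v : V | ∃ u : V, T.Adj v u ∧ T.degree u = 1}.ncard : ℝ)) / 2 :=
  totalDominationNumber_le_tree_general T hT hn
end
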